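/- arXiv:1201.6655 — 2 statements merged into one kernel-verified Lean document; each statement's English description precedes it below -/
import Mathlib

section
/- Regret bound for Kelly markets: for every agent i with initial wealth w_i > 0, the market's cumulative log loss L satisfies L ≤ L_i + log(1/w_i), for every sequence of predictions p_{it} ∈ (0,1), market prices p_t = ∑_j w_{jt} p_{jt} ∈ (0,1), and outcomes y_t ∈ {0,1}. -/
/-!
Each agent's wealth is its initial wealth times the product of its per-round likelihood ratios
against the market, i.e. `w_{iT} = w_i · exp (L - L_i)`. Wealth is conserved and stays positive,
so `w_{iT} ≤ 1`, and taking logarithms gives `L - L_i ≤ log (1 / w_i)`.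
-/

open Finset Real

noncomputable def logLoss (p : ℝ) (y : ℕ) : ℝ :=
  (y : ℝ) * log (1 / p) + (1 - (y : ℝ)) * log (1 / (1 - p))

/-- Factor by which a bettor predicting `p` multiplies its wealth in a market priced at `q`. -/
noncomputable def likelihoodRatio (p q : ℝ) (y : ℕ) : ℝ :=
  (p / q) ^ y * ((1 - p) / (1 - q)) ^ (1 - y)

lemma likelihoodRatio_pos {p q : ℝ} (hp : 0 < p ∧ p < 1) (hq : 0 < q ∧ q < 1) (y : ℕ) :
    0 < likelihoodRatio p q y := by
  have : 0 < 1 - p := by linarith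
  have : 0 < 1 - q := by linarith
  have := hp.1
  have := hq.1
  unfold likelihoodRatio
  positivity

lemma likelihoodRatio_eq_exp_sub_logLoss {p q : ℝ} (hp : 0 < p ∧ p < 1) (hq : 0 < q ∧ q < 1)
    {y : ℕ} (hy : y = 0 ∨ y = 1) :
    likelihoodRatio p q y = exp (logLoss q y - logLoss p y) := by
  have : 0 < 1 - p := by linarith
  have : 0 < 1 - q := by linarith
  rcases hy with rfl | rfl <;>
    simp [likelihoodRatio, logLoss, exp_add, exp_neg, exp_log, hp.1, hq.1, *, div_eq_mul_inv,
      mul_comm]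

lemma sum_mul_likelihoodRatio {ι : Type*} [Fintype ι] {w p : ι → ℝ} {q : ℝ}
    (hw : ∑ j, w j = 1) (hq_eq : q = ∑ j, w j * p j) (hq : 0 < q ∧ q < 1)
    {y : ℕ} (hy : y = 0 ∨ y = 1) :
    ∑ j, w j * likelihoodRatio (p j) q y = 1 := by
  have hq1 : 1 - q ≠ 0 := by linarith
  rcases hy with rfl | rfl
  · have : ∑ j, w j * (1 - p j) = 1 - q := by
      simp only [mul_one_sub, sum_sub_distrib, hw, hq_eq]
    simp only [likelihoodRatio, pow_zero, Nat.sub_zero, pow_one, one_mul, mul_div_assoc',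
      ← sum_div, this, div_self hq1]
  · simp only [likelihoodRatio, pow_one, tsub_self, pow_zero, mul_one, mul_div_assoc', ← sum_div,
      ← hq_eq, div_self hq.1.ne']

section KellyMarket

variable {ι : Type*} {w : ℕ → ι → ℝ} {p : ι → ℕ → ℝ} {q : ℕ → ℝ} {y : ℕ → ℕ}

lemma wealth_pos (hw0 : ∀ i, 0 < w 0 i) (hp : ∀ i t, 0 < p i t ∧ p i t < 1)
    (hq : ∀ t, 0 < q t ∧ q t < 1)
    (hupdate : ∀ t i, w (t + 1) i = w t i * likelihoodRatio (p i t) (q t) (y t)) :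
    ∀ t i, 0 < w t i := by
  intro t
  induction t with
  | zero => exact hw0
  | succ t ih =>
    intro i
    rw [hupdate]
    exact mul_pos (ih i) (likelihoodRatio_pos (hp i t) (hq t) (y t))

lemma sum_wealth_eq_one [Fintype ι] (hw0 : ∑ i, w 0 i = 1) (hy : ∀ t, y t = 0 ∨ y t = 1)
    (hq_eq : ∀ t, q t = ∑ j, w t j * p j t) (hq : ∀ t, 0 < q t ∧ q t < 1)
    (hupdate : ∀ t i, w (t + 1) i = w t i * likelihoodRatio (p i t) (q t) (y t)) :
    ∀ t, ∑ i, w t i = 1 := by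
  intro t
  induction t with
  | zero => exact hw0
  | succ t ih =>
    simp only [hupdate]
    exact sum_mul_likelihoodRatio ih (hq_eq t) (hq t) (hy t)

lemma wealth_eq_mul_exp_regret (hp : ∀ i t, 0 < p i t ∧ p i t < 1)
    (hq : ∀ t, 0 < q t ∧ q t < 1) (hy : ∀ t, y t = 0 ∨ y t = 1)
    (hupdate : ∀ t i, w (t + 1) i = w t i * likelihoodRatio (p i t) (q t) (y t)) (i : ι) (T : ℕ) :
    w T i = w 0 i *
      exp (∑ t ∈ range T, logLoss (q t) (y t) - ∑ t ∈ range T, logLoss (p i t) (y t)) := by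
  induction T with
  | zero => simp
  | succ T ih =>
    rw [hupdate, ih, likelihoodRatio_eq_exp_sub_logLoss (hp i T) (hq T) (hy T), mul_assoc,
      ← exp_add, sum_range_succ, sum_range_succ]
    ring_nf

end KellyMarket

/-- Regret bound for Kelly markets: with wealths updated multiplicatively and
the market price the wealth-weighted average of predictions, the market's
cumulative log loss `L` satisfies `L ≤ L_i + log(1/w_i)` for every agent `i`. -/
theorem kelly_market_regret_bound
    (n T : ℕ) (w : ℕ → Fin n → ℝ) (pit : Fin n → ℕ → ℝ) (pt : ℕ → ℝ)
    (y : ℕ → ℕ)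
    (hw0 : ∀ i, 0 < w 0 i) (hwsum : ∑ i, w 0 i = 1)
    (hpit : ∀ i t, 0 < pit i t ∧ pit i t < 1)
    (hy : ∀ t, y t = 0 ∨ y t = 1)
    (hprice : ∀ t, pt t = ∑ j, w t j * pit j t)
    (hpt : ∀ t, 0 < pt t ∧ pt t < 1)
    (hupdate : ∀ t i, w (t + 1) i =
      w t i * (pit i t / pt t) ^ (y t) * ((1 - pit i t) / (1 - pt t)) ^ (1 - y t))
    (i : Fin n) :
    (∑ t ∈ Finset.range T, ((y t : ℝ) * Real.log (1 / pt t) +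
        (1 - (y t : ℝ)) * Real.log (1 / (1 - pt t)))) ≤
      (∑ t ∈ Finset.range T, ((y t : ℝ) * Real.log (1 / pit i t) +
        (1 - (y t : ℝ)) * Real.log (1 / (1 - pit i t)))) +
      Real.log (1 / w 0 i) := by
  have hstep : ∀ t i, w (t + 1) i = w t i * likelihoodRatio (pit i t) (pt t) (y t) := by
    intro t i
    rw [hupdate, likelihoodRatio, mul_assoc]
  have hpos := wealth_pos hw0 hpit hpt hstep
  have hwT : w T i ≤ 1 := by
    rw [← sum_wealth_eq_one hwsum hy hprice hpt hstep T]
    exact single_le_sum (fun j _ => (hpos T j).le) (mem_univ i)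
  rw [wealth_eq_mul_exp_regret hpit hpt hy hstep i T] at hwT
  have hregret := (le_log_iff_exp_le (one_div_pos.mpr (hw0 i))).mpr
    ((le_div_iff₀' (hw0 i)).mpr hwT)
  change ∑ t ∈ range T, logLoss (pt t) (y t) ≤ ∑ t ∈ range T, logLoss (pit i t) (y t) + _
  linarith
end

section
/- Fractional Kelly market pricing: if each agent i plays λ_i-fractional Kelly, the market-clearing price is p_m = (∑_i λ_i w_i p_i) / (∑_i λ_i w_i); i.e., total demand ∑_i λ_i (w_i/p_m)*(p_i - p_m)/(1 - p_m) = 0 at this price. -/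
open Finset

theorem Finset.sum_mul_sub_weightedMean_eq_zero {ι K : Type*} [Field K] (s : Finset ι)
    (a x : ι → K) (ha : ∑ i ∈ s, a i ≠ 0) :
    ∑ i ∈ s, a i * (x i - (∑ j ∈ s, a j * x j) / ∑ j ∈ s, a j) = 0 := by
  simp only [mul_sub, sum_sub_distrib, ← sum_mul, mul_div_cancel₀ _ ha, sub_self]

theorem fractional_kelly_market_clearing_general
    (n : ℕ) (w p lam : Fin n → ℝ)
    (pm : ℝ)
    (hpm : pm = (∑ i, lam i * w i * p i) / (∑ i, lam i * w i))
    (hpm0 : 0 < pm) :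
    ∑ i, lam i * (w i / pm) * ((p i - pm) / (1 - pm)) = 0 := by
  have hweight : ∑ i, lam i * w i ≠ 0 := by
    rintro h
    simp [hpm, h] at hpm0
  calc ∑ i, lam i * (w i / pm) * ((p i - pm) / (1 - pm))
      = (∑ i, lam i * w i * (p i - pm)) / pm / (1 - pm) := by
        simp only [sum_div]
        congr with i
        ring
    _ = 0 := by
        rw [hpm, sum_mul_sub_weightedMean_eq_zero _ _ _ hweight, zero_div, zero_div]

/-- Fractional Kelly market pricing: at price
`p_m = (∑ λ_i w_i p_i)/(∑ λ_i w_i)`, total demand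
`∑ λ_i (w_i/p_m) (p_i - p_m)/(1 - p_m)` is zero. -/
theorem fractional_kelly_market_clearing
    (n : ℕ) (w p lam : Fin n → ℝ)
    (hw : ∀ i, 0 < w i) (hwsum : ∑ i, w i = 1)
    (hp : ∀ i, 0 < p i ∧ p i < 1)
    (hlam : ∀ i, 0 < lam i ∧ lam i ≤ 1)
    (pm : ℝ)
    (hpm : pm = (∑ i, lam i * w i * p i) / (∑ i, lam i * w i))
    (hpm0 : 0 < pm) (hpm1 : pm < 1) :
    ∑ i, lam i * (w i / pm) * ((p i - pm) / (1 - pm)) = 0 :=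
  fractional_kelly_market_clearing_general n w p lam pm hpm hpm0
end
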